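/- For seven pairs of vectors (xᵢ, yᵢ) ∈ ℂ³ × ℂ³, if there exists an invertible matrix H ∈ GL₃(ℂ) with H·xᵢ parallel to yᵢ (i.e., yᵢ is a nonzero scalar multiple of Hxᵢ) for all i = 1,…,7, then the 7×9 matrix Z with rows xᵢᵀ ⊗ yᵢᵀ has rank at most 6. -/
import Mathlib

open Matrix

/-- The Kronecker product of two vectors in `ℂ³`, as a vector in `ℂ⁹`. -/
def kron (x y : Fin 3 → ℂ) : Fin 9 → ℂ :=
  fun j => x (((finProdFinEquiv (m := 3) (n := 3)).symm j).1) *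
    y (((finProdFinEquiv (m := 3) (n := 3)).symm j).2)

/-- If there is an invertible `H` with `Hxᵢ` parallel to `yᵢ` for seven point pairs, then
the 7×9 matrix with rows `xᵢᵀ ⊗ yᵢᵀ` has rank at most 6. -/
theorem stmt11 (x y : Fin 7 → Fin 3 → ℂ) (H : Matrix (Fin 3) (Fin 3) ℂ)
    (hH : IsUnit H)
    (h : ∀ i, ∃ c : ℂ, c ≠ 0 ∧ y i = c • (H *ᵥ x i)) :
    (Matrix.of fun i j => kron (x i) (y i) j : Matrix (Fin 7) (Fin 9) ℂ).rank ≤ 6 := by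
  set E := finProdFinEquiv (m := 3) (n := 3) with hE
  set Z : Matrix (Fin 7) (Fin 9) ℂ := Matrix.of fun i j => kron (x i) (y i) j with hZ
  choose c hc0 hcy using h
  have hdet : IsUnit H.det := (Matrix.isUnit_iff_isUnit_det H).mp hH
  have hinv : H⁻¹ * H = 1 := Matrix.nonsing_inv_mul H hdet
  -- the three basic skew-symmetric matrices
  set S : Fin 3 → Matrix (Fin 3) (Fin 3) ℂ :=
    ![!![0,1,0;-1,0,0;0,0,0], !![0,0,1;0,0,0;-1,0,0], !![0,0,0;0,0,1;0,-1,0]] with hS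
  set f : Fin 3 → (Fin 9 → ℂ) :=
    fun k j => (S k * H⁻¹) (E.symm j).1 (E.symm j).2 with hf
  -- generic row computation
  have hrow : ∀ (M : Matrix (Fin 3) (Fin 3) ℂ) (i : Fin 7),
      (∑ j : Fin 9, Z i j * M (E.symm j).1 (E.symm j).2)
        = c i * (x i ⬝ᵥ ((M * H) *ᵥ x i)) := by
    intro M i
    have h1 : (∑ j : Fin 9, Z i j * M (E.symm j).1 (E.symm j).2)
        = ∑ p : Fin 3 × Fin 3, x i p.1 * y i p.2 * M p.1 p.2 := by
      rw [← Equiv.sum_comp E.symm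
        (fun p : Fin 3 × Fin 3 => x i p.1 * y i p.2 * M p.1 p.2)]
      rfl
    rw [h1]
    simp only [Fintype.sum_prod_type, Fin.sum_univ_three, dotProduct, mulVec,
      Matrix.mul_apply, hcy i, Pi.smul_apply, smul_eq_mul]
    ring
  -- the f k are in the kernel
  have hker : ∀ k, f k ∈ LinearMap.ker Z.mulVecLin := by
    intro k
    rw [LinearMap.mem_ker]
    funext i
    have : (Z.mulVecLin (f k)) i = ∑ j : Fin 9, Z i j * f k j := by
      simp [Matrix.mulVecLin_apply, Matrix.mulVec, dotProduct]
    rw [this]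
    have h2 : ∑ j : Fin 9, Z i j * f k j
        = c i * (x i ⬝ᵥ ((S k * H⁻¹ * H) *ᵥ x i)) := hrow (S k * H⁻¹) i
    rw [h2, mul_assoc, hinv, mul_one]
    have : x i ⬝ᵥ (S k *ᵥ x i) = 0 := by
      fin_cases k <;>
        · simp [hS, dotProduct, mulVec, Fin.sum_univ_three, Matrix.vecHead, Matrix.vecTail]
          ring
    rw [this, mul_zero]
    rfl
  -- the f k are linearly independent
  have hli : LinearIndependent ℂ f := by
    rw [Fintype.linearIndependent_iff]
    intro g hg
    set A : Matrix (Fin 3) (Fin 3) ℂ := g 0 • S 0 + g 1 • S 1 + g 2 • S 2 with hA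
    have hAH : A * H⁻¹ = 0 := by
      ext a b
      have h3 := congrFun hg (E (a, b))
      simp only [Finset.sum_apply, Fin.sum_univ_three, Pi.add_apply, Pi.smul_apply,
        smul_eq_mul, Pi.zero_apply, hf, Equiv.symm_apply_apply] at h3
      simp only [hA, Matrix.add_mul, Matrix.smul_mul, Matrix.add_apply,
        Matrix.smul_apply, smul_eq_mul, Matrix.zero_apply]
      linear_combination h3
    have hA0 : A = 0 := by
      calc A = A * (H⁻¹ * H) := by rw [hinv, mul_one]
        _ = (A * H⁻¹) * H := by rw [mul_assoc]
        _ = 0 := by rw [hAH, zero_mul]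
    intro k
    fin_cases k
    · have := congrFun (congrFun hA0 0) 1
      simpa [hA, hS] using this
    · have := congrFun (congrFun hA0 0) 2
      simpa [hA, hS] using this
    · have := congrFun (congrFun hA0 1) 2
      simpa [hA, hS] using this
  -- conclude by rank-nullity
  have hcard : 3 ≤ Module.finrank ℂ (LinearMap.ker Z.mulVecLin) := by
    have hli' : LinearIndependent ℂ
        (fun k : Fin 3 => (⟨f k, hker k⟩ : LinearMap.ker Z.mulVecLin)) := by
      apply LinearIndependent.of_comp (LinearMap.ker Z.mulVecLin).subtype
      exact hli
    simpa using hli'.fintype_card_le_finrank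
  have hrn := LinearMap.finrank_range_add_finrank_ker Z.mulVecLin
  rw [Module.finrank_pi] at hrn
  have : Z.rank = Module.finrank ℂ (LinearMap.range Z.mulVecLin) := rfl
  rw [this]
  simp only [Fintype.card_fin] at hrn
  omega
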